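/- arXiv:2405.09727 — 5 statements merged into one kernel-verified Lean document; each statement's English description precedes it below -/
import Mathlib

section
/- Let G=(V,E) be a hypergraph, let T be a nonempty finite index set, and let e_0 and e_k (k in T) be edges of G such that for every k in T one has |(e_0 ∩ e_k) \ ∪_{j in T\{k}} (e_0 ∩ e_j)| ≥ 2. Then every point z of the multilinear set S(G) satisfies the flower inequality centered at e_0 with neighbors e_k, k in T: ∑_{v ∈ e_0 \ ∪_{k∈T} e_k} z_v + ∑_{k∈T} z_{e_k} − z_{e_0} ≤ |e_0 \ ∪_{k∈T} e_k| + |T| − 1. -/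
open Finset

/-- The multilinear set of a hypergraph with node set `V` (all of the type) and edge set `E`.
Points are indexed by `Finset V`: the coordinate of a node `v` is `z {v}` and the coordinate of
an edge `e` is `z e`. -/
def MultilinearSet {V : Type} [DecidableEq V] (E : Finset (Finset V)) :
    Set (Finset V → ℝ) :=
  {z | ∃ x : V → ℝ, (∀ v, x v = 0 ∨ x v = 1) ∧ (∀ v, z {v} = x v) ∧
        ∀ e ∈ E, z e = ∏ v ∈ e, x v}

/-! At a 0/1 point the inequality is trivial when `z_{e_0} = 1`, since every other term is at
most `1`. When `z_{e_0} = 0`, some node `v ∈ e_0` has `z_v = 0`: either `v` lies in no petal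
`e_k`, and then the first sum loses one unit, or `v ∈ e_k` for some `k`, and then `z_{e_k} = 0`
and the second sum loses one unit. -/

namespace Finset

variable {ι : Type*} {s : Finset ι} {f : ι → ℝ}

theorem sum_le_card_of_le_one (hf : ∀ i ∈ s, f i ≤ 1) : ∑ i ∈ s, f i ≤ #s := by
  simpa using sum_le_card_nsmul s f 1 hf

theorem sum_le_card_sub_one_of_eq_zero (hf : ∀ i ∈ s, f i ≤ 1) {a : ι}
    (ha : a ∈ s) (hfa : f a = 0) : ∑ i ∈ s, f i ≤ #s - 1 := by
  classical
  rw [← add_sum_erase s f ha, hfa, zero_add, ← cast_card_erase_of_mem ha]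
  exact sum_le_card_of_le_one fun i hi => hf i (mem_of_mem_erase hi)

end Finset

theorem flower_inequality_of_binary {V T : Type} [DecidableEq V] [Fintype T]
    (x : V → ℝ) (hx : ∀ v, x v = 0 ∨ x v = 1) (e0 : Finset V) (ek : T → Finset V) :
    (∑ v ∈ e0 \ univ.biUnion ek, x v) + (∑ k, ∏ v ∈ ek k, x v) - ∏ v ∈ e0, x v ≤
      (#(e0 \ univ.biUnion ek) : ℝ) + Fintype.card T - 1 := by
  have hx0 (v : V) : 0 ≤ x v := by rcases hx v with h | h <;> simp [h]
  have hx1 (v : V) : x v ≤ 1 := by rcases hx v with h | h <;> simp [h]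
  have hprod_le_one (s : Finset V) : ∏ v ∈ s, x v ≤ 1 :=
    prod_le_one (fun v _ => hx0 v) (fun v _ => hx1 v)
  have hpetals := sum_le_card_of_le_one (s := univ) fun k _ => hprod_le_one (ek k)
  have hcore := sum_le_card_of_le_one (s := e0 \ univ.biUnion ek) fun v _ => hx1 v
  rw [card_univ] at hpetals
  by_cases hzero : ∃ v ∈ e0, x v = 0
  · obtain ⟨v, hv, hxv⟩ := hzero
    rw [prod_eq_zero hv hxv]
    by_cases hvcore : v ∈ e0 \ univ.biUnion ek
    · linarith [sum_le_card_sub_one_of_eq_zero (fun v _ => hx1 v) hvcore hxv]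
    · obtain ⟨k, -, hvk⟩ : ∃ k ∈ univ, v ∈ ek k := by simpa [hv] using hvcore
      have hpetal := sum_le_card_sub_one_of_eq_zero (s := univ)
        (fun k _ => hprod_le_one (ek k)) (mem_univ k) (prod_eq_zero hvk hxv)
      rw [card_univ] at hpetal
      linarith
  · push Not at hzero
    rw [prod_eq_one fun v hv => (hx v).resolve_left (hzero v hv)]
    linarith

theorem flower_inequality_valid_general
    {V : Type} [DecidableEq V]
    (E : Finset (Finset V))
    {T : Type} [Fintype T]
    (e0 : Finset V) (he0 : e0 ∈ E)
    (ek : T → Finset V) (hek : ∀ k, ek k ∈ E)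
    (z : Finset V → ℝ) (hz : z ∈ MultilinearSet E) :
    (∑ v ∈ e0 \ Finset.univ.biUnion ek, z {v}) + (∑ k : T, z (ek k)) - z e0 ≤
      ((e0 \ Finset.univ.biUnion ek).card : ℝ) + (Fintype.card T : ℝ) - 1 := by
  obtain ⟨x, hx, hnode, hedge⟩ := hz
  simp only [hnode, hedge e0 he0, hedge _ (hek _)]
  exact flower_inequality_of_binary x hx e0 ek

/-- every point of the multilinear set satisfies each flower inequality. -/
theorem flower_inequality_valid
    {V : Type} [Fintype V] [DecidableEq V]
    (E : Finset (Finset V)) (hE : ∀ e ∈ E, 2 ≤ e.card)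
    {T : Type} [Fintype T] [DecidableEq T] [Nonempty T]
    (e0 : Finset V) (he0 : e0 ∈ E)
    (ek : T → Finset V) (hek : ∀ k, ek k ∈ E)
    (hflower : ∀ k : T,
      2 ≤ ((e0 ∩ ek k) \ (Finset.univ.erase k).biUnion (fun j => e0 ∩ ek j)).card)
    (z : Finset V → ℝ) (hz : z ∈ MultilinearSet E) :
    (∑ v ∈ e0 \ Finset.univ.biUnion ek, z {v}) + (∑ k : T, z (ek k)) - z e0 ≤
      ((e0 \ Finset.univ.biUnion ek).card : ℝ) + (Fintype.card T : ℝ) - 1 :=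
  flower_inequality_valid_general E e0 he0 ek hek z hz
end

section
/- Let G=(V,E) be the UGM hypergraph of a finite family 𝒞 of cliques, i.e. E = ∪_{C∈𝒞} {e ⊆ C : |e| ≥ 2}. Suppose z satisfies the standard linearization of S(G) and every flower inequality whose edges satisfy ∪_{k∈T} e_k ∪ e_0 ⊆ C for some C ∈ 𝒞. Then z satisfies every flower inequality of G; equivalently, the flower relaxation MP^F(G) (standard linearization plus all flower inequalities) coincides with the polytope MP^{F'}(G) obtained by adding to the standard linearization only those flower inequalities with ∪_{k∈T} e_k ∪ e_0 ⊆ C for some C ∈ 𝒞. -/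
open Finset

/-- The edge set of the UGM hypergraph of a clique family `𝒞`:
all subsets of some clique of cardinality at least two. -/
def ugmEdges {V : Type} [DecidableEq V] (𝒞 : Finset (Finset V)) : Finset (Finset V) :=
  𝒞.biUnion fun C => C.powerset.filter fun e => 2 ≤ e.card

/-- The standard linearization of the multilinear set of the hypergraph `(V, E)`
(node set the whole type `V`). -/
def StdLin {V : Type} [Fintype V] [DecidableEq V] (E : Finset (Finset V))
    (z : Finset V → ℝ) : Prop :=
  (∀ v : V, z {v} ≤ 1) ∧
    ∀ e ∈ E, 0 ≤ z e ∧ (∑ v ∈ e, z {v}) - (e.card : ℝ) + 1 ≤ z e ∧ ∀ v ∈ e, z e ≤ z {v}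

/-- The condition on a center `e0` and a (nonempty) set `N` of neighbor edges under which
the flower inequality is defined:
`|(e0 ∩ f) \ ∪_{g ∈ N, g ≠ f} (e0 ∩ g)| ≥ 2` for every `f ∈ N`. -/
def FlowerCond {V : Type} [DecidableEq V] (e0 : Finset V) (N : Finset (Finset V)) : Prop :=
  N.Nonempty ∧ ∀ f ∈ N, 2 ≤ ((e0 ∩ f) \ (N.erase f).biUnion (fun g => e0 ∩ g)).card

/-- The flower inequality centered at `e0` with neighbors `N`. -/
def FlowerIneq {V : Type} [DecidableEq V] (z : Finset V → ℝ) (e0 : Finset V)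
    (N : Finset (Finset V)) : Prop :=
  (∑ v ∈ e0 \ N.biUnion id, z {v}) + (∑ f ∈ N, z f) - z e0 ≤
    ((e0 \ N.biUnion id).card : ℝ) + (N.card : ℝ) - 1

/-!
Given a flower with center `e₀ ⊆ C₀ ∈ 𝒞`, replace every neighbor `f` by its trace `e₀ ∩ f`.
The traces are again edges (they have at least two nodes and lie in `C₀`), they form a flower
inside `C₀` with the same node part, and `f ↦ e₀ ∩ f` is injective on the neighbors. So the
original inequality follows from the restricted one once `z f ≤ z (e₀ ∩ f)`, which is itself the
restricted flower inequality centered at `e₀ ∩ f` with the single neighbor `f ⊆ C_f`.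
-/

section Flower

variable {V : Type} [DecidableEq V] {e₀ : Finset V} {N : Finset (Finset V)}

theorem mem_ugmEdges {𝒞 : Finset (Finset V)} {e : Finset V} :
    e ∈ ugmEdges 𝒞 ↔ ∃ C ∈ 𝒞, e ⊆ C ∧ 2 ≤ e.card := by
  simp [ugmEdges]

theorem biUnion_image_inter : (N.image (e₀ ∩ ·)).biUnion id = e₀ ∩ N.biUnion id := by
  rw [image_biUnion, inter_biUnion]
  rfl

theorem sdiff_biUnion_image_inter : e₀ \ (N.image (e₀ ∩ ·)).biUnion id = e₀ \ N.biUnion id := by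
  rw [biUnion_image_inter, sdiff_inter_self_left]

theorem flowerCond_singleton {s f : Finset V} : FlowerCond s {f} ↔ 2 ≤ (s ∩ f).card := by
  simp [FlowerCond]

theorem flowerIneq_singleton_iff {z : Finset V → ℝ} {s f : Finset V} (hs : s ⊆ f) :
    FlowerIneq z s {f} ↔ z f ≤ z s := by
  simp only [FlowerIneq, singleton_biUnion, id, sdiff_eq_empty_iff_subset.2 hs, sum_empty,
    sum_singleton, card_empty, card_singleton]
  constructor <;> intro <;> push_cast at * <;> linarith

namespace FlowerCond

theorem two_le_card_inter (h : FlowerCond e₀ N) {f : Finset V} (hf : f ∈ N) :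
    2 ≤ (e₀ ∩ f).card :=
  (h.2 f hf).trans (card_le_card sdiff_subset)

theorem injOn_inter (h : FlowerCond e₀ N) : Set.InjOn (e₀ ∩ ·) N := by
  intro f hf g hg hfg
  by_contra hne
  have hempty : (e₀ ∩ f) \ (N.erase f).biUnion (e₀ ∩ ·) ⊆ ∅ :=
    calc _ ⊆ (e₀ ∩ f) \ (e₀ ∩ g) :=
          sdiff_subset_sdiff subset_rfl (subset_biUnion_of_mem _ (mem_erase.2 ⟨Ne.symm hne, hg⟩))
      _ = ∅ := by rw [show e₀ ∩ f = e₀ ∩ g from hfg, sdiff_self]; rfl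
  simpa using (h.2 f hf).trans (card_le_card hempty)

theorem image_inter (h : FlowerCond e₀ N) : FlowerCond e₀ (N.image (e₀ ∩ ·)) := by
  refine ⟨h.1.image _, forall_mem_image.2 fun f hf => (h.2 f hf).trans (card_le_card ?_)⟩
  rw [inter_left_idem]
  refine sdiff_subset_sdiff subset_rfl (biUnion_subset.2 fun g' hg' => ?_)
  obtain ⟨hne, g, hg, rfl⟩ : g' ≠ e₀ ∩ f ∧ ∃ g ∈ N, e₀ ∩ g = g' := by
    simpa using hg'
  rw [inter_left_idem]
  exact subset_biUnion_of_mem _ (mem_erase.2 ⟨by rintro rfl; exact hne rfl, hg⟩)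

theorem flowerIneq_of_image_inter {z : Finset V → ℝ} (hc : FlowerCond e₀ N)
    (h : FlowerIneq z e₀ (N.image (e₀ ∩ ·))) (hle : ∀ f ∈ N, z f ≤ z (e₀ ∩ f)) :
    FlowerIneq z e₀ N := by
  have hinj := hc.injOn_inter
  unfold FlowerIneq at h ⊢
  rw [sdiff_biUnion_image_inter, card_image_of_injOn hinj, sum_image hinj] at h
  linarith [sum_le_sum hle]

end FlowerCond

end Flower

/-- for a UGM hypergraph, the flower relaxation coincides with the polytope
obtained from the standard linearization by adding only the flower inequalities whose
edges all lie in a single clique. -/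
theorem flower_relaxation_eq_restricted {V : Type} [Fintype V] [DecidableEq V]
    (𝒞 : Finset (Finset V)) :
    {z : Finset V → ℝ | StdLin (ugmEdges 𝒞) z ∧
        ∀ e0 ∈ ugmEdges 𝒞, ∀ N ⊆ ugmEdges 𝒞, FlowerCond e0 N → FlowerIneq z e0 N} =
      {z : Finset V → ℝ | StdLin (ugmEdges 𝒞) z ∧
        ∀ e0 ∈ ugmEdges 𝒞, ∀ N ⊆ ugmEdges 𝒞, FlowerCond e0 N →
          (∃ C ∈ 𝒞, N.biUnion id ∪ e0 ⊆ C) → FlowerIneq z e0 N} := by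
  ext z
  refine and_congr_right fun _ =>
    ⟨fun hfl e0 he0 N hN hc _ => hfl e0 he0 N hN hc, fun hfl e0 he0 N hN hc => ?_⟩
  obtain ⟨C₀, hC₀, he0C₀, -⟩ := mem_ugmEdges.1 he0
  have htrace : ∀ f ∈ N, e0 ∩ f ∈ ugmEdges 𝒞 := fun f hf =>
    mem_ugmEdges.2 ⟨C₀, hC₀, inter_subset_left.trans he0C₀, hc.two_le_card_inter hf⟩
  refine hc.flowerIneq_of_image_inter ?_ fun f hf => ?_
  · refine hfl e0 he0 _ (image_subset_iff.2 htrace) hc.image_inter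
      ⟨C₀, hC₀, union_subset ?_ he0C₀⟩
    rw [biUnion_image_inter]
    exact inter_subset_left.trans he0C₀
  · obtain ⟨C, hC, hfC, -⟩ := mem_ugmEdges.1 (hN hf)
    refine (flowerIneq_singleton_iff inter_subset_right).1
      (hfl _ (htrace f hf) {f} (singleton_subset_iff.2 (hN hf)) ?_ ⟨C, hC, ?_⟩)
    · rw [flowerCond_singleton, inter_right_idem]
      exact hc.two_le_card_inter hf
    · rw [singleton_biUnion, id]
      exact union_subset hfC (inter_subset_right.trans hfC)
end

section
/- Let C be a finite set and let G_C be the complete hypergraph with node set C, whose edges are all subsets of C of cardinality at least two. Then the multilinear polytope MP(G_C), i.e. the convex hull of {z : z_p = ∏_{v∈p} x_v for all nonempty p ⊆ C, for some x ∈ {0,1}^C}, equals the set of all z satisfying ψ_U(z) ≥ 0 for every subset U ⊆ C, where ψ_U(z) := ∑_{W ⊆ U, |W| even} z_{(C\U) ∪ W} − ∑_{W ⊆ U, |W| odd} z_{(C\U) ∪ W}, with the convention z_∅ := 1. -/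
open Finset

/-- Coordinate value with the convention `z_∅ := 1`. -/
def zval {ι : Type} [DecidableEq ι] (z : Finset ι → ℝ) (p : Finset ι) : ℝ :=
  if p = ∅ then 1 else z p

/-- The RLT function `ψ_U(z) = ∑_{W ⊆ U, |W| even} z_{(C\U) ∪ W} − ∑_{W ⊆ U, |W| odd} z_{(C\U) ∪ W}`
for the complete hypergraph on the node set `C = ι` (the whole type). -/
def psiRLT {ι : Type} [Fintype ι] [DecidableEq ι] (z : Finset ι → ℝ) (U : Finset ι) : ℝ :=
  (∑ W ∈ U.powerset.filter fun W => Even W.card, zval z ((Finset.univ \ U) ∪ W)) -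
    ∑ W ∈ U.powerset.filter fun W => Odd W.card, zval z ((Finset.univ \ U) ∪ W)

/-- The multilinear set of the complete hypergraph on node set `ι`: one coordinate `z p`
for every nonempty `p ⊆ ι` (singletons are node coordinates, larger sets edge coordinates). -/
def CompleteMultilinearSet (ι : Type) [DecidableEq ι] : Set (Finset ι → ℝ) :=
  {z | ∃ x : ι → ℝ, (∀ v, x v = 0 ∨ x v = 1) ∧
        ∀ p : Finset ι, p.Nonempty → z p = ∏ v ∈ p, x v}

/-!
Each `ψ_U` is affine in `z`, and at the point of the multilinear set given by `x ∈ {0,1}^C` it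
equals `∏_{v ∉ U} x_v ∏_{v ∈ U} (1 - x_v)`, which is `0` or `1`; so the RLT inequalities hold on
the polytope. Conversely, Möbius inversion on the Boolean lattice of `C` gives
`∑_{U ⊆ C \ p} ψ_U(z) = z_p`, which says that `z = ∑_U ψ_U(z) χ_U` where `χ_U` is the point with
`x = 𝟙_{C \ U}`. The weights sum to `z_∅ = 1`, so if they are nonnegative this is a convex
combination of points of the multilinear set.
-/

namespace Finset

variable {α : Type*} [DecidableEq α]

theorem sum_powerset_sum_powerset_sdiff {M : Type*} [AddCommMonoid M] (S : Finset α)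
    (f : Finset α → Finset α → M) :
    ∑ U ∈ S.powerset, ∑ W ∈ U.powerset, f (U \ W) W =
      ∑ V ∈ S.powerset, ∑ W ∈ (S \ V).powerset, f V W := by
  rw [sum_sigma', sum_sigma']
  refine sum_nbij' (fun q => ⟨q.1 \ q.2, q.2⟩) (fun q => ⟨q.1 ∪ q.2, q.2⟩) ?_ ?_ ?_ ?_ ?_ <;>
    rintro ⟨U, W⟩ h <;> simp only [mem_sigma, mem_powerset, subset_sdiff] at h ⊢
  · exact ⟨sdiff_subset.trans h.1, h.2.trans h.1, disjoint_sdiff_self_right⟩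
  · exact ⟨union_subset h.1 h.2.1, subset_union_right⟩
  · simp [sdiff_union_of_subset h.2]
  · simp [union_sdiff_cancel_right h.2.2.symm]

theorem sum_powerset_sum_powerset_neg_one_pow_smul {M : Type*} [AddCommGroup M] (S : Finset α)
    (h : Finset α → M) :
    ∑ U ∈ S.powerset, ∑ W ∈ U.powerset, (-1 : ℤ) ^ #W • h (U \ W) = h S := by
  rw [sum_powerset_sum_powerset_sdiff S fun V W => (-1 : ℤ) ^ #W • h V]
  simp_rw [← sum_smul, sum_powerset_neg_one_pow_card, sdiff_eq_empty_iff_subset, ite_smul,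
    one_smul, zero_smul]
  rw [sum_eq_single_of_mem S (mem_powerset_self S), if_pos subset_rfl]
  exact fun V hV hVS => if_neg fun hSV => hVS (subset_antisymm (mem_powerset.1 hV) hSV)

end Finset

section

variable {ι : Type} [DecidableEq ι]

theorem zval_eq_prod {z : Finset ι → ℝ} {x : ι → ℝ}
    (hz : ∀ p : Finset ι, p.Nonempty → z p = ∏ v ∈ p, x v) (p : Finset ι) :
    zval z p = ∏ v ∈ p, x v := by
  rcases p.eq_empty_or_nonempty with rfl | hp
  · simp [zval]
  · rw [zval, if_neg hp.ne_empty, hz p hp]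

theorem zval_smul_add_smul (y w : Finset ι → ℝ) {a b : ℝ} (hab : a + b = 1) (p : Finset ι) :
    zval (a • y + b • w) p = a * zval y p + b * zval w p := by
  unfold zval
  split_ifs <;> simp [hab]

/-- The point of the multilinear set with `x = 𝟙_{ι \ U}`. The coordinate `z ∅` is unconstrained
in `CompleteMultilinearSet`, so it is a parameter. -/
def cornerPoint (U : Finset ι) (c : ℝ) : Finset ι → ℝ :=
  Function.update (fun p => if Disjoint p U then 1 else 0) ∅ c

theorem cornerPoint_mem (U : Finset ι) (c : ℝ) : cornerPoint U c ∈ CompleteMultilinearSet ι := by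
  refine ⟨fun v => if v ∈ U then 0 else 1, fun v => by by_cases v ∈ U <;> simp [*],
    fun p hp => ?_⟩
  rw [cornerPoint, Function.update_of_ne hp.ne_empty]
  simp [zero_pow_eq, disjoint_iff_inter_eq_empty]

variable [Fintype ι]

theorem psiRLT_eq_sum_powerset (z : Finset ι → ℝ) (U : Finset ι) :
    psiRLT z U = ∑ W ∈ U.powerset, (-1 : ℤ) ^ #W • zval z ((univ \ U) ∪ W) := by
  rw [psiRLT, ← sum_filter_add_sum_filter_not U.powerset (fun W => Even #W), sub_eq_add_neg,
    ← sum_neg_distrib]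
  simp_rw [Nat.not_even_iff_odd]
  congr 1 <;> refine sum_congr rfl fun W hW => ?_
  · rw [(mem_filter.1 hW).2.neg_one_pow, one_smul]
  · rw [(mem_filter.1 hW).2.neg_one_pow, neg_smul, one_smul]

theorem psiRLT_eq_prod_mul_prod_one_sub {z : Finset ι → ℝ} {x : ι → ℝ}
    (hz : ∀ p : Finset ι, p.Nonempty → z p = ∏ v ∈ p, x v) (U : Finset ι) :
    psiRLT z U = (∏ v ∈ univ \ U, x v) * ∏ v ∈ U, (1 - x v) := by
  rw [psiRLT_eq_sum_powerset, prod_sub, mul_sum]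
  refine sum_congr rfl fun W hW => ?_
  rw [zval_eq_prod hz, prod_union (disjoint_sdiff_self_left.mono_right (mem_powerset.1 hW)),
    zsmul_eq_mul]
  simp only [Int.cast_pow, Int.cast_neg, Int.cast_one, prod_const_one, mul_one]
  ring

theorem completeMultilinearSet_subset_setOf_psiRLT_nonneg :
    CompleteMultilinearSet ι ⊆ {z | ∀ U, 0 ≤ psiRLT z U} := by
  rintro z ⟨x, hx, hz⟩ U
  have hx' : ∀ v, 0 ≤ x v ∧ 0 ≤ 1 - x v := fun v => by rcases hx v with h | h <;> simp [h]
  rw [psiRLT_eq_prod_mul_prod_one_sub hz]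
  exact mul_nonneg (prod_nonneg fun v _ => (hx' v).1) (prod_nonneg fun v _ => (hx' v).2)

theorem psiRLT_smul_add_smul (y w : Finset ι → ℝ) {a b : ℝ} (hab : a + b = 1) (U : Finset ι) :
    psiRLT (a • y + b • w) U = a * psiRLT y U + b * psiRLT w U := by
  simp only [psiRLT, zval_smul_add_smul y w hab, sum_add_distrib, ← mul_sum]
  ring

theorem convex_setOf_psiRLT_nonneg : Convex ℝ {z : Finset ι → ℝ | ∀ U, 0 ≤ psiRLT z U} := by
  intro y hy w hw a b ha hb hab U
  rw [psiRLT_smul_add_smul y w hab]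
  exact add_nonneg (mul_nonneg ha (hy U)) (mul_nonneg hb (hw U))

theorem sum_powerset_compl_psiRLT (z : Finset ι → ℝ) (p : Finset ι) :
    ∑ U ∈ (univ \ p).powerset, psiRLT z U = zval z p := by
  simp_rw [psiRLT_eq_sum_powerset, ← sdiff_sdiff_eq_sdiff_union (subset_univ _)]
  rw [sum_powerset_sum_powerset_neg_one_pow_smul (univ \ p) fun V => zval z (univ \ V),
    Finset.sdiff_sdiff_eq_self (subset_univ p)]

theorem sum_psiRLT (z : Finset ι → ℝ) : ∑ U, psiRLT z U = 1 := by
  simpa [zval] using sum_powerset_compl_psiRLT z ∅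

theorem sum_psiRLT_smul_cornerPoint (z : Finset ι → ℝ) :
    ∑ U, psiRLT z U • cornerPoint U (z ∅) = z := by
  funext p
  simp only [Finset.sum_apply, Pi.smul_apply, smul_eq_mul, cornerPoint]
  rcases eq_or_ne p ∅ with rfl | hp
  · simp only [Function.update_self, ← sum_mul, sum_psiRLT, one_mul]
  · have hdisj : univ.filter (Disjoint p) = (univ \ p).powerset := by
      ext U
      simp [subset_sdiff, disjoint_comm]
    simp only [Function.update_of_ne hp, mul_boole, ← sum_filter]
    rw [hdisj, sum_powerset_compl_psiRLT, zval, if_neg hp]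

end

/-- the multilinear polytope of the complete hypergraph is exactly the set of
points satisfying all the RLT inequalities `ψ_U(z) ≥ 0`, `U ⊆ C`. -/
theorem multilinear_polytope_complete_hypergraph_eq_RLT
    (ι : Type) [Fintype ι] [DecidableEq ι] :
    convexHull ℝ (CompleteMultilinearSet ι) =
      {z : Finset ι → ℝ | ∀ U : Finset ι, 0 ≤ psiRLT z U} := by
  refine (convexHull_min completeMultilinearSet_subset_setOf_psiRLT_nonneg
    convex_setOf_psiRLT_nonneg).antisymm fun z hz => ?_
  rw [← sum_psiRLT_smul_cornerPoint z]
  exact (convex_convexHull ℝ _).sum_mem (fun U _ => hz U) (sum_psiRLT z)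
    fun U _ => subset_convexHull ℝ _ (cornerPoint_mem U _)
end

section
/- Let C be a finite set, let G_C be the complete hypergraph with node set C, and consider the set S^e(G_C) = {z ∈ S(G_C) : ∑_{∅ ≠ p ⊆ C} (−2)^{|p|−1} z_p = 0}. Then the convex hull of S^e(G_C) equals MP(G_C) ∩ {z : ∑_{∅ ≠ p ⊆ C} (−2)^{|p|−1} z_p = 0}; that is, intersecting the multilinear polytope of the complete hypergraph with the linearized parity hyperplane gives exactly the convex hull of the parity-constrained multilinear set. -/
/-!
At the point of the multilinear set with vertex `x ∈ {0,1}^C` one has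
`1 - 2 ∑_p (-2)^{|p|-1} z_p = ∏_v (1 - 2 x_v) = ±1`, so the parity form takes only the values `0`
and `1` on the multilinear set; in particular it is nonnegative there. The zero set of a linear
functional that is nonnegative on `s` meets `convexHull s` in a face, which is the convex hull of
the zeros of the functional in `s`.
-/

open Finset

/-- The linearized parity form `∑_{∅ ≠ p ⊆ C} (−2)^{|p|−1} z_p`. -/
def parityForm {ι : Type} [Fintype ι] [DecidableEq ι] (z : Finset ι → ℝ) : ℝ :=
  ∑ p ∈ Finset.univ.filter fun p : Finset ι => p.Nonempty, (-2 : ℝ) ^ (p.card - 1) * z p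

section

variable {𝕜 E : Type*} [Field 𝕜] [LinearOrder 𝕜] [IsStrictOrderedRing 𝕜] [AddCommGroup E]
  [Module 𝕜 E]

theorem convexHull_sep_eq_convexHull_inter_of_nonneg (φ : E →ₗ[𝕜] 𝕜) {s : Set E}
    (hs : ∀ x ∈ s, 0 ≤ φ x) :
    convexHull 𝕜 {x ∈ s | φ x = 0} = convexHull 𝕜 s ∩ {x | φ x = 0} := by
  refine subset_antisymm (Set.subset_inter (convexHull_mono (Set.sep_subset _ _))
    (convexHull_min (fun x hx => hx.2) (convex_hyperplane φ.isLinear 0))) ?_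
  -- `φ ≥ 0` on `convexHull s`, and a convex combination with `φ = 0` gives weight only to zeros.
  suffices h : convexHull 𝕜 s ⊆ {x | 0 ≤ φ x ∧ (φ x = 0 → x ∈ convexHull 𝕜 {x ∈ s | φ x = 0})} from
    fun x ⟨hx, hx0⟩ => (h hx).2 hx0
  refine convexHull_min (fun x hx => ⟨hs x hx, fun h => subset_convexHull 𝕜 _ ⟨hx, h⟩⟩) ?_
  rintro x ⟨hx, hxs⟩ y ⟨hy, hys⟩ a b ha hb hab
  simp only [Set.mem_ofPred_eq, map_add, map_smul, smul_eq_mul]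
  refine ⟨by positivity, fun h => ?_⟩
  obtain ⟨hax, hby⟩ := (add_eq_zero_iff_of_nonneg (by positivity) (by positivity)).1 h
  rcases ha.eq_or_lt with rfl | ha
  · obtain rfl : b = 1 := by simpa using hab
    simpa using hys (by simpa using hby)
  rcases hb.eq_or_lt with rfl | hb
  · obtain rfl : a = 1 := by simpa using hab
    simpa using hxs (by simpa using hax)
  exact convex_convexHull 𝕜 _ (hxs ((mul_eq_zero.1 hax).resolve_left ha.ne'))
    (hys ((mul_eq_zero.1 hby).resolve_left hb.ne')) ha.le hb.le hab

end

theorem prod_one_sub_two_mul {ι R : Type*} [Fintype ι] [CommRing R] (x : ι → R) :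
    ∏ v, (1 - 2 * x v) =
      1 - 2 * ∑ p ∈ univ.filter fun p : Finset ι => p.Nonempty,
        (-2) ^ (p.card - 1) * ∏ v ∈ p, x v := by
  classical
  have hterm : ∀ p : Finset ι, p.Nonempty →
      ∏ v ∈ p, (-2 * x v) = -2 * ((-2) ^ (p.card - 1) * ∏ v ∈ p, x v) := fun p hp => by
    rw [prod_mul_distrib, prod_const, ← mul_assoc, ← pow_succ', Nat.sub_add_cancel hp.card_pos]
  calc ∏ v, (1 - 2 * x v) = ∑ p : Finset ι, ∏ v ∈ p, (-2 * x v) := by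
        simp only [sub_eq_add_neg, neg_mul_eq_neg_mul, prod_one_add, powerset_univ]
    _ = _ := by
        rw [← sum_filter_add_sum_filter_not univ (fun p : Finset ι => p.Nonempty), sum_congr rfl
          fun p hp => hterm p (mem_filter.1 hp).2, ← mul_sum]
        simp [not_nonempty_iff_eq_empty, filter_eq']
        ring

section

variable {ι : Type} [Fintype ι] [DecidableEq ι]

theorem one_sub_two_mul_parityForm {z : Finset ι → ℝ} {x : ι → ℝ}
    (hzx : ∀ p : Finset ι, p.Nonempty → z p = ∏ v ∈ p, x v) :
    1 - 2 * parityForm z = ∏ v, (1 - 2 * x v) := by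
  rw [prod_one_sub_two_mul, parityForm]
  congr 2
  exact sum_congr rfl fun p hp => by rw [hzx p (mem_filter.1 hp).2]

theorem parityForm_nonneg {z : Finset ι → ℝ} (hz : z ∈ CompleteMultilinearSet ι) :
    0 ≤ parityForm z := by
  obtain ⟨x, hx, hzx⟩ := hz
  have hprod : ∏ v, (1 - 2 * x v) ≤ 1 :=
    calc ∏ v, (1 - 2 * x v) ≤ |∏ v, (1 - 2 * x v)| := le_abs_self _
      _ = 1 := by
        rw [abs_prod]
        exact prod_eq_one fun v _ => by rcases hx v with h | h <;> norm_num [h]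
  linarith [one_sub_two_mul_parityForm hzx]

variable (ι) in
def parityFormLinearMap : (Finset ι → ℝ) →ₗ[ℝ] ℝ where
  toFun := parityForm
  map_add' z w := by simp only [parityForm, Pi.add_apply, mul_add, sum_add_distrib]
  map_smul' c z := by
    simp only [parityForm, Pi.smul_apply, smul_eq_mul, RingHom.id_apply, mul_sum, mul_left_comm]

end

/-- the convex hull of the parity-constrained multilinear set of the complete
hypergraph equals the multilinear polytope intersected with the parity hyperplane. -/
theorem convex_hull_parity_constrained_multilinear_set
    (ι : Type) [Fintype ι] [DecidableEq ι] :
    convexHull ℝ {z ∈ CompleteMultilinearSet ι | parityForm z = 0} =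
      convexHull ℝ (CompleteMultilinearSet ι) ∩ {z | parityForm z = 0} :=
  convexHull_sep_eq_convexHull_inter_of_nonneg (parityFormLinearMap ι) fun _ => parityForm_nonneg
end

section
/- For every positive integer n, the convex hull of the set of binary vectors x ∈ {0,1}^n with an even number of ones equals the polytope {x ∈ [0,1]^n : ∑_{i∈S} (1 − x_i) + ∑_{i∈[n]\S} x_i ≥ 1 for every subset S ⊆ [n] of odd cardinality}. -/
/-!
The odd-set polytope `Q` is compact and convex, so by Krein–Milman it is the closed convex hull of
its extreme points, and it suffices to show that these are even binary vectors. A binary point of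
`Q` is even, since an odd binary vector violates its own odd-set inequality. A point of `Q` cannot
have exactly one fractional coordinate: rounding the others and choosing the last one to make the
support odd gives an odd vertex at distance `< 1`. If `x` has two fractional coordinates `i ≠ j`,
then any two distinct odd sets tight at `x` differ exactly in `{i, j}` (their distances to `x` add
up to at least `|S ∆ T| ≥ 2`, with slack at a fractional coordinate outside `S ∆ T`). Hence one of
the directions `±eᵢ ± eⱼ` keeps all tight inequalities tight, and `x` is the midpoint of two points
of `Q`.
-/

open Finset Filter Topology
open scoped symmDiff

theorem Finset.two_le_card_symmDiff {α : Type*} [DecidableEq α] {S T : Finset α} (hS : Odd #S)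
    (hT : Odd #T) (hST : S ≠ T) : 2 ≤ #(S ∆ T) := by
  have hcard : #(S ∆ T) + 2 * #(S ∩ T) = #S + #T := by
    rw [Finset.symmDiff_def, card_union_of_disjoint disjoint_sdiff_sdiff,
      ← card_sdiff_add_card_inter S T, ← card_sdiff_add_card_inter T S, inter_comm T S]
    ring
  have heven : Even #(S ∆ T) := by
    simpa [← hcard, Nat.even_add, even_two_mul] using hS.add_odd hT
  have hpos : 0 < #(S ∆ T) := card_pos.mpr (symmDiff_nonempty.mpr hST)
  obtain ⟨k, hk⟩ := heven
  omega

theorem eq_zero_or_eq_one_of_notMem_Ioo {x : ℝ} (hx : 0 ≤ x ∧ x ≤ 1) (h : x ∉ Set.Ioo 0 1) :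
    x = 0 ∨ x = 1 := by
  rw [Set.mem_Ioo, not_and_or, not_lt, not_lt] at h
  rcases h with h | h
  · exact Or.inl (le_antisymm h hx.1)
  · exact Or.inr (le_antisymm hx.2 h)

theorem notMem_extremePoints_of_eventually_add_smul_mem {E : Type*} [AddCommGroup E] [Module ℝ E]
    {A : Set E} {x d : E} (hd : d ≠ 0) (h : ∀ᶠ c in 𝓝 (0 : ℝ), x + c • d ∈ A) :
    x ∉ A.extremePoints ℝ := by
  obtain ⟨ε, hε, hball⟩ := Metric.eventually_nhds_iff.mp h
  have hmem : ∀ c : ℝ, |c| < ε → x + c • d ∈ A := fun c hc => hball (by simpa using hc)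
  intro hx
  have hε2 : |ε / 2| < ε := by rw [abs_of_pos (half_pos hε)]; linarith
  have hsub : x - (ε / 2) • d ∈ A := by
    simpa [sub_eq_add_neg, neg_smul] using hmem (-(ε / 2)) (by rwa [abs_neg])
  have hseg : x ∈ openSegment ℝ (x - (ε / 2) • d) (x + (ε / 2) • d) := by
    simpa only [midpoint_sub_add] using
      midpoint_mem_openSegment (𝕜 := ℝ) (x - (ε / 2) • d) (x + (ε / 2) • d)
  have := mem_extremePoints_iff_left.mp hx |>.2 _ hsub _ (hmem _ hε2) hseg
  simp [hd, hε.ne'] at this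

namespace ParityPolytope

def evenVertices (ι : Type*) [Fintype ι] : Set (ι → ℝ) :=
  {x | (∀ i, x i = 0 ∨ x i = 1) ∧ Even (univ.filter fun i => x i = 1).card}

/-- For `x ∈ [0,1]^ι` this is the `ℓ¹`-distance from `x` to the indicator vector of `S`. -/
def cubeDist {ι : Type*} [Fintype ι] [DecidableEq ι] (S : Finset ι) (x : ι → ℝ) : ℝ :=
  ∑ i, if i ∈ S then 1 - x i else x i

def oddSetPolytope (ι : Type*) [Fintype ι] [DecidableEq ι] : Set (ι → ℝ) :=
  {x | (∀ i, 0 ≤ x i ∧ x i ≤ 1) ∧ ∀ S : Finset ι, Odd #S → 1 ≤ cubeDist S x}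

variable {ι : Type*} [Fintype ι]

theorem evenVertices_finite : (evenVertices ι).Finite :=
  (Set.Finite.pi fun _ => (Set.finite_singleton (1 : ℝ)).insert 0).subset
    fun _ hx i _ => hx.1 i

variable [DecidableEq ι]

theorem cubeDist_eq_sum_add_sum_sdiff (S : Finset ι) (x : ι → ℝ) :
    cubeDist S x = ∑ i ∈ S, (1 - x i) + ∑ i ∈ univ \ S, x i := by
  rw [cubeDist, sum_ite, filter_mem_eq_inter, univ_inter, filter_notMem_eq_sdiff]

theorem cubeDist_add_smul (S : Finset ι) (x d : ι → ℝ) (c : ℝ) :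
    cubeDist S (x + c • d) = cubeDist S x + c * ∑ i, if i ∈ S then -d i else d i := by
  simp only [cubeDist, mul_sum, ← sum_add_distrib, Pi.add_apply, Pi.smul_apply, smul_eq_mul]
  refine sum_congr rfl fun i _ => ?_
  split_ifs <;> ring

theorem cubeDist_smul_add_smul (S : Finset ι) (x y : ι → ℝ) {a b : ℝ} (hab : a + b = 1) :
    cubeDist S (a • x + b • y) = a * cubeDist S x + b * cubeDist S y := by
  obtain rfl : b = 1 - a := by linarith
  simp only [cubeDist, mul_sum, ← sum_add_distrib, Pi.add_apply, Pi.smul_apply, smul_eq_mul]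
  refine sum_congr rfl fun i _ => ?_
  split_ifs <;> ring

theorem cubeDist_eq_of_binary_off {S : Finset ι} {x : ι → ℝ} {i : ι}
    (hbin : ∀ k ≠ i, x k = 0 ∨ x k = 1) (hS : ∀ k ≠ i, k ∈ S ↔ x k = 1) :
    cubeDist S x = if i ∈ S then 1 - x i else x i := by
  refine Fintype.sum_eq_single i fun k hk => ?_
  rcases hbin k hk with h | h <;> simp [hS k hk, h]

theorem convex_oddSetPolytope : Convex ℝ (oddSetPolytope ι) := by
  intro x hx y hy a b ha hb hab
  refine ⟨fun i => ⟨?_, ?_⟩, fun S hS => ?_⟩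
  · simp only [Pi.add_apply, Pi.smul_apply, smul_eq_mul]
    nlinarith [hx.1 i, hy.1 i]
  · simp only [Pi.add_apply, Pi.smul_apply, smul_eq_mul]
    nlinarith [hx.1 i, hy.1 i]
  · rw [cubeDist_smul_add_smul S x y hab]
    nlinarith [hx.2 S hS, hy.2 S hS]

theorem isCompact_oddSetPolytope : IsCompact (oddSetPolytope ι) := by
  have hclosed : IsClosed (oddSetPolytope ι) := by
    simp only [oddSetPolytope, Set.ofPred_and, Set.ofPred_forall]
    exact (isClosed_iInter fun i => (isClosed_le continuous_const (continuous_apply i)).inter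
      (isClosed_le (continuous_apply i) continuous_const)).inter
      (isClosed_iInter fun S => isClosed_iInter fun _ =>
        isClosed_le continuous_const (continuous_finsetSum _ fun i _ => by split_ifs <;> fun_prop))
  exact (isCompact_univ_pi fun _ => isCompact_Icc).of_isClosed_subset hclosed
    fun _ hx i _ => hx.1 i

theorem evenVertices_subset_oddSetPolytope : evenVertices ι ⊆ oddSetPolytope ι := by
  rintro x ⟨hbin, heven⟩
  have hbox : ∀ i, 0 ≤ x i ∧ x i ≤ 1 := fun i => by rcases hbin i with h | h <;> simp [h]
  refine ⟨hbox, fun S hS => ?_⟩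
  set B := univ.filter fun i => x i = 1
  have hSB : S ≠ B := by rintro rfl; exact Nat.not_odd_iff_even.mpr heven hS
  obtain ⟨k, hk⟩ := symmDiff_nonempty.mpr hSB
  have hterm : (if k ∈ S then 1 - x k else x k) = 1 := by
    rcases mem_symmDiff.mp hk with ⟨h1, h2⟩ | ⟨h1, h2⟩
    · rcases hbin k with h | h <;> simp_all [B]
    · simp_all [B]
  rw [← hterm]
  exact single_le_sum (f := fun i => if i ∈ S then 1 - x i else x i)
    (fun i _ => by split_ifs <;> linarith [hbox i]) (mem_univ k)

theorem even_card_of_binary_mem {x : ι → ℝ} (hx : x ∈ oddSetPolytope ι)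
    (hbin : ∀ i, x i = 0 ∨ x i = 1) : Even (univ.filter fun i => x i = 1).card := by
  by_contra hodd
  rw [Nat.not_even_iff_odd] at hodd
  obtain ⟨i, hi⟩ := card_pos.mp hodd.pos
  have := hx.2 _ hodd
  rw [cubeDist_eq_of_binary_off (fun k _ => hbin k) (fun k _ => by simp), if_pos hi,
    (mem_filter.mp hi).2] at this
  norm_num at this

theorem exists_ne_mem_Ioo {x : ι → ℝ} (hx : x ∈ oddSetPolytope ι) {i : ι}
    (hi : x i ∈ Set.Ioo 0 1) : ∃ j ≠ i, x j ∈ Set.Ioo 0 1 := by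
  by_contra! hfrac
  have hbin : ∀ k ≠ i, x k = 0 ∨ x k = 1 := fun k hk =>
    eq_zero_or_eq_one_of_notMem_Ioo (hx.1 k) (hfrac k hk)
  set B := univ.filter fun k => x k = 1
  have hiB : i ∉ B := by simp [B, hi.2.ne]
  obtain ⟨S, hS, hSB⟩ : ∃ S : Finset ι, Odd #S ∧ ∀ k ≠ i, k ∈ S ↔ x k = 1 := by
    rcases Nat.even_or_odd #B with hB | hB
    · exact ⟨insert i B, by rw [card_insert_of_notMem hiB]; exact hB.add_one,
        fun k hk => by simp [B, hk]⟩
    · exact ⟨B, hB, fun k _ => by simp [B]⟩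
  have := hx.2 S hS
  rw [cubeDist_eq_of_binary_off hbin hSB] at this
  split_ifs at this <;> linarith [hi.1, hi.2]

theorem mem_symmDiff_of_cubeDist_eq_one {S T : Finset ι} {x : ι → ℝ} {i : ι}
    (hx : ∀ i, 0 ≤ x i ∧ x i ≤ 1) (hS : Odd #S) (hT : Odd #T) (hST : S ≠ T)
    (hS1 : cubeDist S x = 1) (hT1 : cubeDist T x = 1) (hi : x i ∈ Set.Ioo 0 1) :
    i ∈ S ∆ T := by
  by_contra hiST
  set g : ι → ℝ := fun k => (if k ∈ S then 1 - x k else x k) + (if k ∈ T then 1 - x k else x k)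
  have hg_nonneg : ∀ k, 0 ≤ g k := fun k => by
    simp only [g]; split_ifs <;> linarith [hx k]
  have hg_symmDiff : ∀ k ∈ S ∆ T, g k = 1 := fun k hk => by
    rcases mem_symmDiff.mp hk with ⟨h1, h2⟩ | ⟨h1, h2⟩ <;> simp [g, h1, h2]
  have hg_i : 0 < g i := by
    have : (i ∈ S ↔ i ∈ T) := by rw [mem_symmDiff] at hiST; tauto
    simp only [g, this]; split_ifs <;> linarith [hi.1, hi.2]
  have : #(S ∆ T) + g i ≤ cubeDist S x + cubeDist T x := calc
    #(S ∆ T) + g i = ∑ k ∈ insert i (S ∆ T), g k := by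
      rw [sum_insert hiST, sum_congr rfl hg_symmDiff]; simp [add_comm]
    _ ≤ ∑ k, g k := sum_le_univ_sum_of_nonneg hg_nonneg
    _ = cubeDist S x + cubeDist T x := sum_add_distrib
  have := two_le_card_symmDiff hS hT hST
  have : (2 : ℝ) ≤ #(S ∆ T) := by exact_mod_cast this
  linarith

theorem eventually_add_smul_mem {x d : ι → ℝ} (hx : x ∈ oddSetPolytope ι)
    (hd : ∀ k, d k ≠ 0 → x k ∈ Set.Ioo 0 1)
    (htight : ∀ T : Finset ι, Odd #T → cubeDist T x = 1 →
      ∑ i, (if i ∈ T then -d i else d i) = 0) :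
    ∀ᶠ c in 𝓝 (0 : ℝ), x + c • d ∈ oddSetPolytope ι := by
  have hbox : ∀ᶠ c in 𝓝 (0 : ℝ), ∀ k, 0 ≤ x k + c * d k ∧ x k + c * d k ≤ 1 := by
    refine eventually_all.2 fun k => ?_
    by_cases hdk : d k = 0
    · exact Eventually.of_forall fun c => by simpa [hdk] using hx.1 k
    have hcont : Tendsto (fun c : ℝ => x k + c * d k) (𝓝 0) (𝓝 (x k)) :=
      (by fun_prop : Continuous fun c : ℝ => x k + c * d k).tendsto' 0 _ (by simp)
    filter_upwards [hcont.eventually (isOpen_Ioo.mem_nhds (hd k hdk))] with c hc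
    exact ⟨hc.1.le, hc.2.le⟩
  have hodd : ∀ᶠ c in 𝓝 (0 : ℝ), ∀ T : Finset ι, Odd #T → 1 ≤ cubeDist T (x + c • d) := by
    refine eventually_all.2 fun T => ?_
    by_cases hT : Odd #T
    swap
    · exact Eventually.of_forall fun c h => absurd h hT
    simp only [hT, forall_const, cubeDist_add_smul]
    rcases (hx.2 T hT).eq_or_lt with hT1 | hT1
    · exact Eventually.of_forall fun c => by simp [htight T hT hT1.symm, ← hT1]
    have hcont : Tendsto (fun c : ℝ => cubeDist T x + c * ∑ i, (if i ∈ T then -d i else d i))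
        (𝓝 0) (𝓝 (cubeDist T x)) :=
      (continuous_const.add (continuous_id.mul continuous_const)).tendsto' 0 _ (by simp)
    exact (hcont.eventually (lt_mem_nhds hT1)).mono fun c hc => hc.le
  filter_upwards [hbox, hodd] with c hc₁ hc₂
  exact ⟨by simpa using hc₁, hc₂⟩

theorem exists_symmDiff_iff_of_cubeDist_eq_one {x : ι → ℝ} (hx : ∀ i, 0 ≤ x i ∧ x i ≤ 1) {i j : ι}
    (hi : x i ∈ Set.Ioo 0 1) (hj : x j ∈ Set.Ioo 0 1) :
    ∃ S : Finset ι, ∀ T : Finset ι, Odd #T → cubeDist T x = 1 → (i ∈ S ∆ T ↔ j ∈ S ∆ T) := by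
  by_cases h : ∃ S : Finset ι, Odd #S ∧ cubeDist S x = 1
  · obtain ⟨S, hS, hS1⟩ := h
    refine ⟨S, fun T hT hT1 => ?_⟩
    rcases eq_or_ne S T with rfl | hST
    · simp
    · exact iff_of_true (mem_symmDiff_of_cubeDist_eq_one hx hS hT hST hS1 hT1 hi)
        (mem_symmDiff_of_cubeDist_eq_one hx hS hT hST hS1 hT1 hj)
  · simp only [not_exists, not_and] at h
    exact ⟨∅, fun T hT hT1 => absurd hT1 (h T hT)⟩

theorem binary_of_mem_extremePoints {x : ι → ℝ} (hx : x ∈ (oddSetPolytope ι).extremePoints ℝ)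
    (i : ι) : x i = 0 ∨ x i = 1 := by
  have hxQ : x ∈ oddSetPolytope ι := hx.1
  by_contra hbin
  have hi : x i ∈ Set.Ioo 0 1 :=
    by_contra fun h => hbin (eq_zero_or_eq_one_of_notMem_Ioo (hxQ.1 i) h)
  obtain ⟨j, hji, hj⟩ := exists_ne_mem_Ioo hxQ hi
  obtain ⟨S, hS⟩ := exists_symmDiff_iff_of_cubeDist_eq_one hxQ.1 hi hj
  -- Along `d = σᵢ eᵢ - σⱼ eⱼ` every tight inequality stays tight: a tight `T` agrees with `S`
  -- at both `i` and `j` or at neither.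
  set σ : ι → ℝ := fun k => if k ∈ S then -1 else 1
  set d : ι → ℝ := fun k => if k = i then σ i else if k = j then -σ j else 0
  refine notMem_extremePoints_of_eventually_add_smul_mem (d := d) ?_
    (eventually_add_smul_mem hxQ ?_ ?_) hx
  · intro hd
    have := congrFun hd i
    simp only [d, σ, if_pos rfl, Pi.zero_apply] at this
    split_ifs at this <;> norm_num at this
  · intro k hk
    by_cases hki : k = i
    · exact hki ▸ hi
    by_cases hkj : k = j
    · exact hkj ▸ hj
    simp [d, hki, hkj] at hk
  · intro T hT hT1
    have hij := hS T hT hT1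
    rw [Fintype.sum_eq_add i j hji.symm fun k ⟨hki, hkj⟩ => by simp [d, hki, hkj]]
    simp only [d, σ, if_pos rfl, if_neg hji, mem_symmDiff] at hij ⊢
    split_ifs at hij ⊢ <;> simp_all

theorem extremePoints_subset_evenVertices :
    (oddSetPolytope ι).extremePoints ℝ ⊆ evenVertices ι := fun _ hx =>
  ⟨binary_of_mem_extremePoints hx, even_card_of_binary_mem hx.1 (binary_of_mem_extremePoints hx)⟩

theorem convexHull_evenVertices : convexHull ℝ (evenVertices ι) = oddSetPolytope ι := by
  refine (convexHull_min evenVertices_subset_oddSetPolytope convex_oddSetPolytope).antisymm ?_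
  calc oddSetPolytope ι
      = closure (convexHull ℝ ((oddSetPolytope ι).extremePoints ℝ)) :=
        (closure_convexHull_extremePoints isCompact_oddSetPolytope convex_oddSetPolytope).symm
    _ ⊆ closure (convexHull ℝ (evenVertices ι)) :=
        closure_mono (convexHull_mono extremePoints_subset_evenVertices)
    _ = convexHull ℝ (evenVertices ι) := (evenVertices_finite.isClosed_convexHull ℝ).closure_eq

end ParityPolytope

theorem parity_polytope_description_general (n : ℕ) :
    convexHull ℝ {x : Fin n → ℝ | (∀ i, x i = 0 ∨ x i = 1) ∧
        Even ((Finset.univ.filter fun i => x i = 1).card)} =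
      {x : Fin n → ℝ | (∀ i, 0 ≤ x i ∧ x i ≤ 1) ∧
        ∀ S : Finset (Fin n), Odd S.card →
          1 ≤ (∑ i ∈ S, (1 - x i)) + ∑ i ∈ Finset.univ \ S, x i} := by
  simpa only [ParityPolytope.evenVertices, ParityPolytope.oddSetPolytope,
    ParityPolytope.cubeDist_eq_sum_add_sum_sdiff] using
    ParityPolytope.convexHull_evenVertices (ι := Fin n)

/-- Jeroslow: the parity polytope, i.e. the convex hull of the binary vectors
with an even number of ones, is described by the box constraints together with the odd-set
inequalities `∑_{i ∈ S} (1 − x_i) + ∑_{i ∉ S} x_i ≥ 1` for all odd-cardinality `S ⊆ [n]`. -/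
theorem parity_polytope_description (n : ℕ) (hn : 0 < n) :
    convexHull ℝ {x : Fin n → ℝ | (∀ i, x i = 0 ∨ x i = 1) ∧
        Even ((Finset.univ.filter fun i => x i = 1).card)} =
      {x : Fin n → ℝ | (∀ i, 0 ≤ x i ∧ x i ≤ 1) ∧
        ∀ S : Finset (Fin n), Odd S.card →
          1 ≤ (∑ i ∈ S, (1 - x i)) + ∑ i ∈ Finset.univ \ S, x i} :=
  parity_polytope_description_general n
end
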